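/- arXiv:1209.6458 — 2 statements merged into one kernel-verified Lean document; each statement's English description precedes it below -/
import Mathlib

section
/- Let $X$ be a compact topological space and suppose $\mathcal{RC}$ is the set of triples $(\alpha, \tau, G)$ where $\alpha$ is an open cover of $X$, $\tau \in \mathbb{N}$, $G = (G_k : \alpha \to U)_{k=0}^{\tau-1}$, and for every $A \in \alpha$, $F_{G_{\tau-1}(A)} \circ \cdots \circ F_{G_0(A)}(A) \subseteq \mathrm{int}\,K$. If a coder-controller achieves robust weak invariance of $K$ in time $q$ with channel alphabet sizes $\mu_0, \dots, \mu_{q-1}$, then $\inf_{(\alpha,\tau,G) \in \mathcal{RC}} \frac{\log_2 N(\alpha)}{\tau} \le \frac{1}{q}\sum_{k=0}^{q-1} \log_2 \mu_k$. -/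
/-- `Ncov α W` is the minimal cardinality of a finite subcollection of `α` covering `W`. -/
noncomputable def Ncov {X : Type*} (α : Set (Set X)) (W : Set X) : ℕ :=
  sInf {n | ∃ F : Finset (Set X), ↑F ⊆ α ∧ W ⊆ ⋃₀ (F : Set (Set X)) ∧ F.card = n}

/-- `seqComp F u x` applies the inputs `u 0, u 1, …` in order to the state `x`. -/
def seqComp {X U : Type*} (F : X → U → X) {n : ℕ} (u : Fin n → U) (x : X) : X :=
  (List.ofFn u).foldl F x

/-- Necessity: if a coder-controller with alphabet sizes `μ_0, …, μ_{q-1}` achieves robust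
weak invariance of `K` in time `q`, then the robust weak topological feedback entropy
`inf_{(α,τ,G)} log₂ N(α) / τ` is at most the average data rate `(1/q) ∑ log₂ μ_k`. -/
theorem rwtfe_le_data_rate {X U : Type*} [TopologicalSpace X] [CompactSpace X]
    (K : Set X) (hK : IsCompact K) (hKint : (interior K).Nonempty)
    (F : X → U → X)
    (q : ℕ) (hq : 0 < q) (μ : Fin q → ℕ) (hμ : ∀ k, 1 ≤ μ k)
    (Γ : X → ((k : Fin q) → Fin (μ k))) (Δ : ((k : Fin q) → Fin (μ k)) → Fin q → U)
    (hinv : ∀ x0 : X, ∃ O : Set X, IsOpen O ∧ x0 ∈ O ∧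
      ∀ x ∈ O, seqComp F (Δ (Γ x0)) x ∈ interior K) :
    sInf {r : ℝ | ∃ (α : Set (Set X)) (τ : ℕ) (G : Set X → Fin τ → U),
        (∀ A ∈ α, IsOpen A) ∧ ⋃₀ α = Set.univ ∧ 0 < τ ∧
        (∀ A ∈ α, ∀ x ∈ A, seqComp F (G A) x ∈ interior K) ∧
        r = Real.logb 2 (Ncov α Set.univ) / τ} ≤
      (1 / (q : ℝ)) * ∑ k, Real.logb 2 (μ k) := by
  classical
  choose O hOopen hOmem hOinv using hinv
  set A : ((k : Fin q) → Fin (μ k)) → Set X := fun s => ⋃ x0 ∈ {x0 | Γ x0 = s}, O x0 with hA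
  set α : Set (Set X) := Set.range A with hα
  have hmemA : ∀ x : X, x ∈ A (Γ x) := fun x =>
    Set.mem_biUnion rfl (hOmem x)
  set G : Set X → Fin q → U := fun B =>
    if h : ∃ s, B = A s then Δ h.choose else Δ (fun k => ⟨0, hμ k⟩) with hG
  have hGinv : ∀ B ∈ α, ∀ x ∈ B, seqComp F (G B) x ∈ interior K := by
    rintro B ⟨s, rfl⟩ x hx
    have h : ∃ s', A s = A s' := ⟨s, rfl⟩
    have hGB : G (A s) = Δ h.choose := dif_pos h
    have hx' : x ∈ A h.choose := by rw [← h.choose_spec]; exact hx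
    simp only [hA] at hx'
    obtain ⟨x0, hx0, hxO⟩ := Set.mem_iUnion₂.mp hx'
    have := hOinv x0 x hxO
    rw [hGB, ← hx0]
    exact this
  have hopen : ∀ B ∈ α, IsOpen B := by
    rintro B ⟨s, rfl⟩
    exact isOpen_biUnion fun x0 _ => hOopen x0
  have hcover : ⋃₀ α = Set.univ := by
    ext x
    simp only [Set.mem_univ, iff_true]
    exact ⟨A (Γ x), ⟨Γ x, rfl⟩, hmemA x⟩
  have hcard : Ncov α Set.univ ≤ ∏ k, μ k := by
    have hF : (Finset.image A Finset.univ).card ∈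
        {n | ∃ F : Finset (Set X), ↑F ⊆ α ∧
          Set.univ ⊆ ⋃₀ (F : Set (Set X)) ∧ F.card = n} := by
      refine ⟨Finset.image A Finset.univ, ?_, ?_, rfl⟩
      · intro B hB
        simp only [Finset.coe_image, Set.mem_image, Finset.mem_coe] at hB
        obtain ⟨s, _, rfl⟩ := hB
        exact ⟨s, rfl⟩
      · intro x _
        exact ⟨A (Γ x), by simp, hmemA x⟩
    calc Ncov α Set.univ ≤ (Finset.image A Finset.univ).card := Nat.sInf_le hF
      _ ≤ (Finset.univ : Finset ((k : Fin q) → Fin (μ k))).card := Finset.card_image_le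
      _ = ∏ k, μ k := by simp [Fintype.card_pi]
  have hbdd : BddBelow {r : ℝ | ∃ (α : Set (Set X)) (τ : ℕ) (G : Set X → Fin τ → U),
        (∀ A ∈ α, IsOpen A) ∧ ⋃₀ α = Set.univ ∧ 0 < τ ∧
        (∀ A ∈ α, ∀ x ∈ A, seqComp F (G A) x ∈ interior K) ∧
        r = Real.logb 2 (Ncov α Set.univ) / τ} := by
    refine ⟨0, ?_⟩
    rintro r ⟨β, τ, G', _, _, hτ, _, rfl⟩
    have h0 : (0:ℝ) ≤ Real.logb 2 (Ncov β Set.univ) := by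
      rcases Nat.eq_zero_or_pos (Ncov β Set.univ) with h | h
      · simp [h]
      · exact Real.logb_nonneg one_lt_two (by exact_mod_cast h)
    positivity
  have hmem : Real.logb 2 (Ncov α Set.univ) / q ∈ {r : ℝ | ∃ (α : Set (Set X)) (τ : ℕ)
      (G : Set X → Fin τ → U),
        (∀ A ∈ α, IsOpen A) ∧ ⋃₀ α = Set.univ ∧ 0 < τ ∧
        (∀ A ∈ α, ∀ x ∈ A, seqComp F (G A) x ∈ interior K) ∧
        r = Real.logb 2 (Ncov α Set.univ) / τ} :=
    ⟨α, q, G, hopen, hcover, hq, hGinv, rfl⟩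
  refine le_trans (csInf_le hbdd hmem) ?_
  have hprodpos : ∀ k ∈ (Finset.univ : Finset (Fin q)), (0:ℝ) < (μ k : ℝ) := by
    intro k _
    exact_mod_cast hμ k
  have hprod : (∑ k, Real.logb 2 (μ k)) = Real.logb 2 (∏ k, (μ k : ℝ)) :=
    (Real.logb_prod _ _ (fun k hk => (hprodpos k hk).ne')).symm
  have honeN : 1 ≤ ∏ k, μ k := Finset.one_le_prod' fun k _ => hμ k
  have hone : (1:ℝ) ≤ ∏ k, (μ k : ℝ) := by exact_mod_cast honeN
  have hle : Real.logb 2 (Ncov α Set.univ) ≤ Real.logb 2 (∏ k, (μ k : ℝ)) := by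
    rcases Nat.eq_zero_or_pos (Ncov α Set.univ) with h | h
    · rw [h]
      simp only [Nat.cast_zero, Real.logb_zero]
      exact Real.logb_nonneg one_lt_two hone
    · apply (Real.logb_le_logb one_lt_two (by exact_mod_cast h)
        (lt_of_lt_of_le one_pos hone)).mpr
      have : ((Ncov α Set.univ : ℕ) : ℝ) ≤ ((∏ k, μ k : ℕ) : ℝ) := by exact_mod_cast hcard
      rwa [Nat.cast_prod] at this
  rw [one_div, inv_mul_eq_div, hprod]
  gcongr
end

section
/- Let $X$ be a compact topological space, $K \subseteq X$ compact with nonempty interior, and $(\alpha, \tau, G)$ a triple with $\alpha$ an open cover of $X$, $\tau \in \mathbb{N}$, $G = (G_k : \alpha \to U)_{k=0}^{\tau-1}$, such that for every $A \in \alpha$, $F_{G_{\tau-1}(A)} \circ \cdots \circ F_{G_0(A)}(A) \subseteq \mathrm{int}\,K$. Then there exists a map $c : X \to \{1, \dots, m\}$ with $m = N(\alpha)$ and input sequences $u^{(1)}, \dots, u^{(m)} \in U^\tau$ such that for every $x_0 \in X$ there is an open set $O(x_0) \ni x_0$ with $F_{u^{(c(x_0))}_{\tau-1}} \circ \cdots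 \circ F_{u^{(c(x_0))}_0}(x) \in \mathrm{int}\,K$ for all $x \in O(x_0)$. -/
/-- Achievability: a triple `(α, τ, G)` satisfying the invariance constraint induces a
coder `c : X → {1,…,m}` with `m = N(α)` and controls `u⁽¹⁾,…,u⁽ᵐ⁾ ∈ Uᵗ` achieving robust
weak invariance: every nominal initial state has a neighbourhood all of whose points are
driven into `int K` by the inputs selected via `c`. -/
theorem rwtfe_achievability {X U : Type*} [TopologicalSpace X] [CompactSpace X]
    (K : Set X) (hK : IsCompact K) (hKint : (interior K).Nonempty)
    (F : X → U → X)
    (α : Set (Set X)) (hopen : ∀ A ∈ α, IsOpen A) (hcov : ⋃₀ α = Set.univ)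
    (τ : ℕ) (hτ : 0 < τ) (G : Set X → Fin τ → U)
    (hRC : ∀ A ∈ α, ∀ x ∈ A, seqComp F (G A) x ∈ interior K) :
    ∃ (c : X → Fin (Ncov α Set.univ)) (u : Fin (Ncov α Set.univ) → Fin τ → U),
      ∀ x0 : X, ∃ O : Set X, IsOpen O ∧ x0 ∈ O ∧
        ∀ x ∈ O, seqComp F (u (c x0)) x ∈ interior K := by
  -- The set of achievable cardinalities is nonempty, by compactness of `X`.
  have hne : {n | ∃ F : Finset (Set X), ↑F ⊆ α ∧ (Set.univ : Set X) ⊆ ⋃₀ (F : Set (Set X)) ∧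
      F.card = n}.Nonempty := by
    classical
    obtain ⟨t, ht⟩ := isCompact_univ.elim_finite_subcover (fun A : α => (A : Set X))
      (fun A => hopen A A.2) (by rw [← hcov]; intro x hx; simpa using hx)
    refine ⟨(t.image Subtype.val).card, t.image Subtype.val, ?_, ?_, rfl⟩
    · intro A hA
      simp only [Finset.coe_image, Set.mem_image] at hA
      obtain ⟨B, _, rfl⟩ := hA
      exact B.2
    · intro x hx
      have := ht hx
      simp only [Set.mem_iUnion] at this
      obtain ⟨A, hA, hxA⟩ := this
      refine ⟨A, ?_, hxA⟩
      simp only [Finset.coe_image, Set.mem_image, Finset.mem_coe]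
      exact ⟨A, hA, rfl⟩
  have hmem := Nat.sInf_mem hne
  obtain ⟨Fs, hFs, hcovF, hcard⟩ := hmem
  -- enumerate the minimal subcover
  have e : Fs ≃ Fin (Ncov α Set.univ) := Fs.equivFin.trans (finCongr hcard)
  have hpick : ∀ x : X, ∃ A : Fs, x ∈ (A : Set X) := by
    intro x
    obtain ⟨A, hA, hxA⟩ := hcovF (Set.mem_univ x)
    exact ⟨⟨A, hA⟩, hxA⟩
  choose pick hpickmem using hpick
  refine ⟨fun x => e (pick x), fun i => G ((e.symm i : Set X)), fun x0 => ?_⟩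
  refine ⟨(pick x0 : Set X), hopen _ (hFs (pick x0).2), hpickmem x0, fun x hx => ?_⟩
  simp only [e.symm_apply_apply]
  exact hRC _ (hFs (pick x0).2) x hx
end
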